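/- Let m ≥ 4 and 1 ≤ k ≤ 2m−4. Let f be the linear endomorphism of 𝔤⁴_{(m,m−1)} + ψ_{2,k} given by f(X₁) = X₁, f(X_j) = (k+j−1)X_j for 2 ≤ j ≤ 2m, and f(X_{2m+1}) = (2k+2m−1)X_{2m+1}. Then f is a derivation of 𝔤⁴_{(m,m−1)} + ψ_{2,k}, and the semidirect product 𝔯^{4,k}_{(m,m−1)} = (𝔤⁴_{(m,m−1)} + ψ_{2,k}) ⋊ ℂf is a (2m+2)-dimensional solvable Lie algebra which is complete (its center is zero and every derivation of it is inner), and whose nilradical is 𝔤⁴_{(m,m−1)} + ψ_{2,k}; that is, the ideal spanned by X₁,…,X_{2m+1} is nilpotent, contains every nilpotent ideal of 𝔯^{4,k}_{(m,m−1)}, and is isomorphic as a Lie algebra to 𝔤⁴_{(m,m−1)} + ψ_{2,k}. -/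

import Mathlib

open Module

/-- The `i`-th basis vector (1-indexed); `0` when out of range. -/
noncomputable def basisVec {L : Type} [AddCommGroup L] [Module ℂ L] {n : ℕ}
    (b : Basis (Fin n) ℂ L) (i : ℕ) : L :=
  if h : 1 ≤ i ∧ i ≤ n then b ⟨i - 1, by omega⟩ else 0

/-- `b` realizes the structure constants of the deformation `𝔤⁴_{(m,m-1)} + ψ_{2,k}`
(1-indexed basis `X₁,…,X_{2m+1}`): `[X₁,Xⱼ] = X_{j+1}` for `2 ≤ j ≤ 2m-1`,
`[X₂,Xⱼ] = X_{j+1+k}` for `3 ≤ j ≤ 2m-1-k`, `[Xⱼ,X_{2m+1-j}] = (-1)ʲ X_{2m+1}` for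
`2 ≤ j ≤ m`, all other brackets of basis vectors being zero up to antisymmetry. -/
def IsG4kBasis {L : Type} [LieRing L] [LieAlgebra ℂ L] (m k : ℕ)
    (b : Basis (Fin (2 * m + 1)) ℂ L) : Prop :=
  ∀ a c : ℕ, a < c →
    ⁅basisVec b a, basisVec b c⁆ =
      (if a = 1 ∧ 2 ≤ c ∧ c ≤ 2 * m - 1 then basisVec b (c + 1) else 0) +
      (if a = 2 ∧ 3 ≤ c ∧ c ≤ 2 * m - 1 - k then basisVec b (c + 1 + k) else 0) +
      (if 2 ≤ a ∧ a ≤ m ∧ a + c = 2 * m + 1 then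
        ((-1 : ℂ)) ^ a • basisVec b (2 * m + 1) else 0)

/-- The diagonal endomorphism `f` of `𝔤⁴_{(m,m-1)} + ψ_{2,k}`:
`f(X₁) = X₁`, `f(Xⱼ) = (k+j-1)Xⱼ` for `2 ≤ j ≤ 2m`, `f(X_{2m+1}) = (2k+2m-1)X_{2m+1}`. -/
noncomputable def fTorus {L : Type} [LieRing L] [LieAlgebra ℂ L] (m k : ℕ)
    (b : Basis (Fin (2 * m + 1)) ℂ L) : L →ₗ[ℂ] L :=
  b.constr ℂ (fun v : Fin (2 * m + 1) =>
    if v.val = 0 then b v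
    else if v.val ≤ 2 * m - 1 then ((k + v.val : ℕ) : ℂ) • b v
    else ((2 * k + 2 * m - 1 : ℕ) : ℂ) • b v)

namespace StmtAux

open Module

def evN (m k i : ℕ) : ℕ := if i ≤ 1 then 1 else if i ≤ 2*m then k + i - 1 else 2*k + 2*m - 1

variable {L : Type} [LieRing L] [LieAlgebra ℂ L] {m k : ℕ}
  (b : Basis (Fin (2 * m + 1)) ℂ L)

lemma basisVec_fin (p : Fin (2 * m + 1)) : basisVec b ((p : ℕ) + 1) = b p := by
  have h : 1 ≤ (p:ℕ)+1 ∧ (p:ℕ)+1 ≤ 2*m+1 := ⟨by omega, by omega⟩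
  have he : (⟨(p:ℕ)+1-1, by omega⟩ : Fin (2*m+1)) = p := by ext; simp
  rw [basisVec, dif_pos h, he]

lemma basisVec_zero (i : ℕ) (h : ¬(1 ≤ i ∧ i ≤ 2*m+1)) : basisVec b i = 0 := dif_neg h

lemma fTorus_basisVec (i : ℕ) :
    fTorus m k b (basisVec b i) = (evN m k i : ℂ) • basisVec b i := by
  by_cases h : 1 ≤ i ∧ i ≤ 2*m+1
  · rw [basisVec, dif_pos h, fTorus, Basis.constr_basis]
    split_ifs with h1 h2
    · rw [show evN m k i = 1 from by unfold evN; split_ifs <;> simp at h1 ⊢ <;> omega]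
      simp
    · rw [show evN m k i = k + (i-1) from by unfold evN; split_ifs <;> simp at h1 h2 ⊢ <;> omega]
    · rw [show evN m k i = 2*k+2*m-1 from by unfold evN; split_ifs <;> simp at h1 h2 ⊢ <;> omega]
  · rw [basisVec_zero b i h]; simp

lemma keyF (hm : 4 ≤ m) (hk1 : 1 ≤ k) (hb : IsG4kBasis m k b) {a c : ℕ} (h : a < c) :
    fTorus m k b ⁅basisVec b a, basisVec b c⁆
      = ((evN m k a + evN m k c : ℕ) : ℂ) • ⁅basisVec b a, basisVec b c⁆ := by
  rw [hb a c h]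
  simp only [map_add, smul_add]
  congr 1
  · congr 1
    · split_ifs with h1
      · rw [fTorus_basisVec,
          show evN m k (c+1) = evN m k a + evN m k c from by unfold evN; split_ifs <;> omega]
      · simp
    · split_ifs with h1
      · rw [fTorus_basisVec,
          show evN m k (c+1+k) = evN m k a + evN m k c from by unfold evN; split_ifs <;> omega]
      · simp
  · split_ifs with h1
    · rw [map_smul, fTorus_basisVec,
        show evN m k (2*m+1) = evN m k a + evN m k c from by unfold evN; split_ifs <;> omega]
      exact smul_comm _ _ _
    · simp

lemma fTorus_basis (p : Fin (2*m+1)) :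
    fTorus m k b (b p) = (evN m k ((p:ℕ)+1) : ℂ) • b p := by
  rw [← basisVec_fin b p, fTorus_basisVec]

lemma keyF2 (hm : 4 ≤ m) (hk1 : 1 ≤ k) (hb : IsG4kBasis m k b) (p q : Fin (2*m+1)) :
    fTorus m k b ⁅b p, b q⁆
      = ((evN m k ((p:ℕ)+1) + evN m k ((q:ℕ)+1) : ℕ) : ℂ) • ⁅b p, b q⁆ := by
  rcases lt_trichotomy ((p:ℕ)+1) ((q:ℕ)+1) with hlt | heq | hgt
  · rw [← basisVec_fin b p, ← basisVec_fin b q]; exact keyF b hm hk1 hb hlt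
  · have : p = q := by ext; omega
    subst this
    simp
  · rw [← lie_skew (b p) (b q), map_neg, ← basisVec_fin b p, ← basisVec_fin b q,
      keyF b hm hk1 hb hgt, smul_neg, Nat.add_comm]

lemma fTorus_deriv (hm : 4 ≤ m) (hk1 : 1 ≤ k) (hb : IsG4kBasis m k b) :
    ∀ x y : L, fTorus m k b ⁅x, y⁆ = ⁅fTorus m k b x, y⁆ + ⁅x, fTorus m k b y⁆ := by
  let Φ : L →ₗ[ℂ] L →ₗ[ℂ] L := LinearMap.mk₂ ℂ (fun x y => fTorus m k b ⁅x, y⁆)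
    (fun x x' y => by rw [add_lie, map_add]) (fun r x y => by rw [smul_lie, map_smul])
    (fun x y y' => by rw [lie_add, map_add]) (fun r x y => by rw [lie_smul, map_smul])
  let Ψ : L →ₗ[ℂ] L →ₗ[ℂ] L :=
    LinearMap.mk₂ ℂ (fun x y => ⁅fTorus m k b x, y⁆ + ⁅x, fTorus m k b y⁆)
    (fun x x' y => by rw [map_add, add_lie, add_lie]; abel)
    (fun r x y => by rw [map_smul, smul_lie, smul_lie, smul_add])
    (fun x y y' => by rw [map_add, lie_add, lie_add]; abel)
    (fun r x y => by rw [map_smul, lie_smul, lie_smul, smul_add])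
  suffices hΦΨ : Φ = Ψ by
    intro x y
    exact DFunLike.congr_fun (DFunLike.congr_fun hΦΨ x) y
  apply b.ext; intro p; apply Basis.ext b; intro q
  show fTorus m k b ⁅b p, b q⁆ = ⁅fTorus m k b (b p), b q⁆ + ⁅b p, fTorus m k b (b q)⁆
  rw [keyF2 b hm hk1 hb p q, fTorus_basis, fTorus_basis, smul_lie, lie_smul, ← add_smul]
  push_cast
  ring_nf

end StmtAux

namespace StmtAux
section C2
open Module Submodule
variable {L : Type} [LieRing L] [LieAlgebra ℂ L] {m k : ℕ}
  (b : Basis (Fin (2 * m + 1)) ℂ L)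

/-- span of basis vectors with 1-index ≥ s -/
noncomputable def VF (s : ℕ) : Submodule ℂ L :=
  Submodule.span ℂ (basisVec b '' Set.Ici s)

lemma VF_mono {s t : ℕ} (h : s ≤ t) : VF b t ≤ VF b s :=
  Submodule.span_mono (Set.image_mono (Set.Ici_subset_Ici.mpr h))

lemma VF_one : VF b 1 = ⊤ := by
  rw [eq_top_iff, ← b.span_eq]
  apply Submodule.span_le.mpr
  rintro x ⟨p, rfl⟩
  exact Submodule.subset_span ⟨(p:ℕ)+1, by simp, basisVec_fin b p⟩

lemma VF_bot : VF b (2*m+2) = ⊥ := by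
  rw [eq_bot_iff]
  apply Submodule.span_le.mpr
  rintro x ⟨i, hi, rfl⟩
  have : ¬(1 ≤ i ∧ i ≤ 2*m+1) := by simp at hi; omega
  rw [basisVec_zero b i this]
  simp

lemma brk_mem (hb : IsG4kBasis m k b) (a c s : ℕ) (hc : s ≤ c) :
    ⁅basisVec b a, basisVec b c⁆ ∈ VF b (s+1) := by
  rcases lt_trichotomy a c with h | h | h
  · rw [hb a c h]
    refine add_mem (add_mem ?_ ?_) ?_
    · split_ifs with h1
      · exact Submodule.subset_span ⟨c+1, by simp; omega, rfl⟩
      · exact zero_mem _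
    · split_ifs with h1
      · exact Submodule.subset_span ⟨c+1+k, by simp; omega, rfl⟩
      · exact zero_mem _
    · split_ifs with h1
      · exact Submodule.smul_mem _ _ (Submodule.subset_span ⟨2*m+1, by simp; omega, rfl⟩)
      · exact zero_mem _
  · subst h; rw [lie_self]; exact zero_mem _
  · rw [← lie_skew (basisVec b a) (basisVec b c)]
    refine neg_mem ?_
    rw [hb c a h]
    refine add_mem (add_mem ?_ ?_) ?_
    · split_ifs with h1
      · exact Submodule.subset_span ⟨a+1, by simp; omega, rfl⟩
      · exact zero_mem _
    · split_ifs with h1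
      · exact Submodule.subset_span ⟨a+1+k, by simp; omega, rfl⟩
      · exact zero_mem _
    · split_ifs with h1
      · exact Submodule.smul_mem _ _ (Submodule.subset_span ⟨2*m+1, by simp; omega, rfl⟩)
      · exact zero_mem _

lemma brk_mem' (hb : IsG4kBasis m k b) (s : ℕ) (x y : L) (hy : y ∈ VF b s) :
    ⁅x, y⁆ ∈ VF b (s+1) := by
  induction hy using Submodule.span_induction with
  | mem y hy =>
    obtain ⟨c, hc, rfl⟩ := hy
    have hx : x ∈ Submodule.span ℂ (Set.range b) := by rw [b.span_eq]; trivial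
    induction hx using Submodule.span_induction with
    | mem x hx =>
      obtain ⟨p, rfl⟩ := hx
      rw [← basisVec_fin b p]
      exact brk_mem b hb _ _ s hc
    | zero => rw [zero_lie]; exact zero_mem _
    | add x x' hx hx' ihx ihx' => rw [add_lie]; exact add_mem ihx ihx'
    | smul r x hx ihx => rw [smul_lie]; exact Submodule.smul_mem _ _ ihx
  | zero => rw [lie_zero]; exact zero_mem _
  | add y y' hy hy' ihy ihy' => rw [lie_add]; exact add_mem ihy ihy'
  | smul r y hy ihy => rw [lie_smul]; exact Submodule.smul_mem _ _ ihy

/-- the ideal version -/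
noncomputable def VFI (hb : IsG4kBasis m k b) (s : ℕ) : LieIdeal ℂ L :=
  { VF b s with
    lie_mem := fun {x y} hy => by
      have := brk_mem' b hb s x y hy
      exact VF_mono b (Nat.le_succ s) this }

lemma VFI_coe (hb : IsG4kBasis m k b) (s : ℕ) :
    ((VFI b hb s : LieIdeal ℂ L) : Submodule ℂ L) = VF b s := rfl

lemma L_nilpotent (hb : IsG4kBasis m k b) : LieRing.IsNilpotent L := by
  have key : ∀ i, LieModule.lowerCentralSeries ℂ L L i ≤ VFI b hb (i+1) := by
    intro i
    induction i with
    | zero =>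
      rw [LieModule.lowerCentralSeries_zero]
      intro x _
      show x ∈ VF b 1
      rw [VF_one]; trivial
    | succ i ih =>
      rw [LieModule.lowerCentralSeries_succ]
      have h1 : ⁅(⊤ : LieIdeal ℂ L), LieModule.lowerCentralSeries ℂ L L i⁆ ≤
          ⁅(⊤ : LieIdeal ℂ L), VFI b hb (i+1)⁆ := LieSubmodule.mono_lie_right _ ih
      refine le_trans h1 ?_
      rw [LieSubmodule.lie_le_iff]
      intro x _ y hy
      exact brk_mem' b hb (i+1) x y hy
  rw [LieRing.IsNilpotent, LieModule.isNilpotent_iff ℂ]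
  use 2*m+1
  rw [eq_bot_iff]
  refine le_trans (key (2*m+1)) ?_
  intro x hx
  have : x ∈ VF b (2*m+2) := hx
  rw [VF_bot] at this
  simpa using this

end C2
end StmtAux

namespace StmtAux
open Module Submodule

lemma mainR {L : Type} [LieRing L] [LieAlgebra ℂ L] {m k : ℕ} (hm : 4 ≤ m)
    (hk1 : 1 ≤ k) (hk2 : k ≤ 2 * m - 4)
    (b : Basis (Fin (2 * m + 1)) ℂ L) (hb : IsG4kBasis m k b)
    (R : Type) [LieRing R] [LieAlgebra ℂ R] (ι : L →ₗ[ℂ] R) (T : R)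
    (hinj : Function.Injective ι) (hmul : ∀ x y : L, ι ⁅x, y⁆ = ⁅ι x, ι y⁆)
    (hT : ∀ x : L, ⁅T, ι x⁆ = ι (fTorus m k b x))
    (hTn : T ∉ LinearMap.range ι)
    (hsp : Submodule.span ℂ (Set.range ι ∪ {T}) = ⊤) :
    (finrank ℂ R = 2 * m + 2 ∧
     LieAlgebra.IsSolvable R ∧
     LieAlgebra.center ℂ R = ⊥ ∧
     (∀ d : LieDerivation ℂ R R, ∃ x : R, ∀ y : R, d y = ⁅x, y⁆) ∧
     ∃ N : LieIdeal ℂ R, (N : Submodule ℂ R) = LinearMap.range ι ∧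
       LieRing.IsNilpotent N ∧
       (∀ J : LieIdeal ℂ R, LieRing.IsNilpotent J → J ≤ N) ∧
       Nonempty (N ≃ₗ⁅ℂ⁆ L)) := by
  -- basis of R
  have hrange : Submodule.span ℂ (Set.range (⇑ι ∘ ⇑b)) = LinearMap.range ι := by
    rw [Set.range_comp, Submodule.span_image, b.span_eq, Submodule.map_top]
  have hli : LinearIndependent ℂ (Fin.cons T (⇑ι ∘ ⇑b) : Fin (2*m+1+1) → R) := by
    apply LinearIndependent.fin_cons
    · exact b.linearIndependent.map' ι (LinearMap.ker_eq_bot.mpr hinj)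
    · rw [hrange]; exact hTn
  have hsp2 : ⊤ ≤ Submodule.span ℂ
      (Set.range (Fin.cons T (⇑ι ∘ ⇑b) : Fin (2*m+1+1) → R)) := by
    rw [Fin.range_cons, ← hsp]
    apply Submodule.span_le.mpr
    rintro x (⟨y, rfl⟩ | rfl)
    · have : ι y ∈ Submodule.span ℂ (Set.range (⇑ι ∘ ⇑b)) := by
        rw [hrange]; exact ⟨y, rfl⟩
      exact Submodule.span_mono (Set.subset_insert _ _) this
    · exact Submodule.subset_span (Set.mem_insert _ _)
  set B : Basis (Fin (2*m+1+1)) ℂ R := Basis.mk hli hsp2 with hBdef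
  have hB0 : B 0 = T := by rw [hBdef, Basis.mk_apply, Fin.cons_zero]
  have hBnat : ∀ (i : ℕ) (h1 : 1 ≤ i) (h2 : i ≤ 2*m+1),
      B ⟨i, by omega⟩ = ι (basisVec b i) := by
    intro i h1 h2
    have hsucc : (⟨i, by omega⟩ : Fin (2*m+1+1)) = Fin.succ ⟨i-1, by omega⟩ := by
      ext; simp; omega
    rw [hBdef, Basis.mk_apply, hsucc, Fin.cons_succ]
    show ι (b ⟨i-1, by omega⟩) = ι (basisVec b i)
    congr 1
    rw [← basisVec_fin b ⟨i-1, by omega⟩]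
    congr 1
    simp
    omega
  have hBj : ∀ j : Fin (2*m+1+1), j ≠ 0 → B j = ι (basisVec b j.val) := by
    intro j hj
    have h1 : 1 ≤ j.val := by
      rcases Nat.eq_zero_or_pos j.val with h | h
      · exact absurd (Fin.ext h) hj
      · exact h
    have h2 : j.val ≤ 2*m+1 := by omega
    rw [← hBnat j.val h1 h2]
  -- eigenvalues
  set Λ : Fin (2*m+1+1) → ℂ := fun j => if j.val = 0 then 0 else (evN m k j.val : ℂ) with hΛdef
  have evN_cast_ne : ∀ i : ℕ, 1 ≤ i → (evN m k i : ℂ) ≠ 0 := by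
    intro i hi
    have : evN m k i ≠ 0 := by unfold evN; split_ifs <;> omega
    exact_mod_cast this
  have hΛne : ∀ j : Fin (2*m+1+1), j ≠ 0 → Λ j ≠ 0 := by
    intro j hj
    have h1 : j.val ≠ 0 := fun h => hj (Fin.ext h)
    rw [hΛdef]
    simp only [h1, if_false]
    exact evN_cast_ne j.val (by omega)
  have hΛinj : Function.Injective Λ := by
    have mono : ∀ i j : ℕ, 1 ≤ i → i < j → j ≤ 2*m+1 → evN m k i < evN m k j := by
      intro i j h1 h2 h3; unfold evN; split_ifs <;> omega
    intro i j hij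
    by_contra hne
    have hvne : i.val ≠ j.val := fun h => hne (Fin.ext h)
    rcases Nat.eq_zero_or_pos i.val with hi0 | hi0
    · have hj0 : j.val ≠ 0 := by omega
      have := hΛne j (fun h => hj0 (by rw [h]; rfl))
      rw [← hij] at this
      exact this (by rw [hΛdef]; simp [hi0])
    · rcases Nat.eq_zero_or_pos j.val with hj0 | hj0
      · have := hΛne i (fun h => (by omega : i.val ≠ 0) (by rw [h]; rfl))
        exact this (by rw [hij, hΛdef]; simp [hj0])
      · have hΛi : Λ i = (evN m k i.val : ℂ) := by rw [hΛdef]; simp [Nat.pos_iff_ne_zero.mp hi0]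
        have hΛj : Λ j = (evN m k j.val : ℂ) := by rw [hΛdef]; simp [Nat.pos_iff_ne_zero.mp hj0]
        rw [hΛi, hΛj] at hij
        have : evN m k i.val = evN m k j.val := by exact_mod_cast hij
        rcases Nat.lt_or_ge i.val j.val with h | h
        · exact absurd this (Nat.ne_of_lt (mono _ _ hi0 h (by omega)))
        · have : evN m k j.val < evN m k i.val := mono _ _ hj0 (by omega) (by omega)
          omega
  have hTY : ∀ i : ℕ, ⁅T, ι (basisVec b i)⁆ = (evN m k i : ℂ) • ι (basisVec b i) := by
    intro i
    rw [hT, fTorus_basisVec, map_smul]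
  have adTB : ∀ j : Fin (2*m+1+1), ⁅T, B j⁆ = Λ j • B j := by
    intro j
    by_cases hj : j = 0
    · subst hj
      rw [hB0, lie_self, hΛdef]
      simp
    · rw [hBj j hj, hTY, hΛdef]
      have : j.val ≠ 0 := fun h => hj (Fin.ext h)
      simp [this]
  have repT : ∀ (v : R) (j : Fin (2*m+1+1)), B.repr ⁅T, v⁆ j = Λ j * B.repr v j := by
    intro v j
    have hc : (B.coord j).comp ((LieAlgebra.ad ℂ R T) : R →ₗ[ℂ] R) = Λ j • B.coord j := by
      apply B.ext
      intro i
      simp only [LinearMap.comp_apply, LieHom.coe_toLinearMap, LieAlgebra.ad_apply,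
        LinearMap.smul_apply, Basis.coord_apply]
      rw [adTB i, map_smul]
      simp only [Finsupp.smul_apply, smul_eq_mul, Basis.repr_self]
      by_cases hij : i = j
      · subst hij; rfl
      · rw [Finsupp.single_apply]
        simp [hij]
    have := DFunLike.congr_fun hc v
    simpa [Basis.coord_apply, LieAlgebra.ad_apply] using this
  -- finrank
  have hfinrank : finrank ℂ R = 2 * m + 2 := by
    rw [finrank_eq_card_basis B, Fintype.card_fin]
  -- range ι is a Lie ideal
  have hTx : ∀ x : R, ⁅T, x⁆ ∈ LinearMap.range ι := by
    intro x
    have hx : x ∈ Submodule.span ℂ (Set.range ⇑ι ∪ {T}) := by rw [hsp]; exact trivial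
    induction hx using Submodule.span_induction with
    | mem y hy =>
      rcases hy with ⟨z, rfl⟩ | rfl
      · exact ⟨fTorus m k b z, (hT z).symm⟩
      · rw [lie_self]; exact zero_mem _
    | zero => rw [lie_zero]; exact zero_mem _
    | add y y' _ _ ihy ihy' => rw [lie_add]; exact add_mem ihy ihy'
    | smul r y _ ihy => rw [lie_smul]; exact Submodule.smul_mem _ _ ihy
  have hNlie : ∀ (y v : R), v ∈ LinearMap.range ι → ⁅y, v⁆ ∈ LinearMap.range ι := by
    intro y v hv
    have hy : y ∈ Submodule.span ℂ (Set.range ⇑ι ∪ {T}) := by rw [hsp]; exact trivial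
    induction hy using Submodule.span_induction with
    | mem y hy =>
      rcases hy with ⟨z, rfl⟩ | rfl
      · obtain ⟨z0, rfl⟩ := hv
        exact ⟨⁅z, z0⁆, hmul z z0⟩
      · obtain ⟨z0, rfl⟩ := hv
        exact ⟨fTorus m k b z0, (hT z0).symm⟩
    | zero => rw [zero_lie]; exact zero_mem _
    | add y y' _ _ ihy ihy' => rw [add_lie]; exact add_mem ihy ihy'
    | smul r y _ ihy => rw [smul_lie]; exact Submodule.smul_mem _ _ ihy
  have brkR : ∀ x y : R, ⁅x, y⁆ ∈ LinearMap.range ι := by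
    intro x y
    have hy : y ∈ Submodule.span ℂ (Set.range ⇑ι ∪ {T}) := by rw [hsp]; exact trivial
    induction hy using Submodule.span_induction with
    | mem y hy =>
      rcases hy with ⟨z, rfl⟩ | rfl
      · exact hNlie x (ι z) ⟨z, rfl⟩
      · rw [← lie_skew]; exact neg_mem (hTx x)
    | zero => rw [lie_zero]; exact zero_mem _
    | add y y' _ _ ihy ihy' => rw [lie_add]; exact add_mem ihy ihy'
    | smul r y _ ihy => rw [lie_smul]; exact Submodule.smul_mem _ _ ihy
  set NI : LieIdeal ℂ R :=
    { LinearMap.range ι with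
      lie_mem := fun {x y} hy => hNlie x y hy } with hNIdef
  have hNIcoe : (NI : Submodule ℂ R) = LinearMap.range ι := rfl
  -- the U filtration
  have fVF : ∀ (s : ℕ) (v : L), v ∈ VF b s → fTorus m k b v ∈ VF b s := by
    intro s v hv
    induction hv using Submodule.span_induction with
    | mem y hy =>
      obtain ⟨i, hi, rfl⟩ := hy
      rw [fTorus_basisVec]
      exact Submodule.smul_mem _ _ (Submodule.subset_span ⟨i, hi, rfl⟩)
    | zero => rw [map_zero]; exact zero_mem _
    | add y y' _ _ ihy ihy' => rw [map_add]; exact add_mem ihy ihy'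
    | smul r y _ ihy => rw [map_smul]; exact Submodule.smul_mem _ _ ihy
  have hUlie : ∀ (s : ℕ) (y v : R), v ∈ Submodule.map ι (VF b s) →
      ⁅y, v⁆ ∈ Submodule.map ι (VF b s) := by
    intro s y v hv
    have hy : y ∈ Submodule.span ℂ (Set.range ⇑ι ∪ {T}) := by rw [hsp]; exact trivial
    induction hy using Submodule.span_induction with
    | mem y hy =>
      obtain ⟨w, hw, rfl⟩ := hv
      rcases hy with ⟨z, rfl⟩ | rfl
      · rw [← hmul]
        exact ⟨⁅z, w⁆, VF_mono b (Nat.le_succ s) (brk_mem' b hb s z w hw), rfl⟩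
      · rw [hT]
        exact ⟨fTorus m k b w, fVF s w hw, rfl⟩
    | zero => rw [zero_lie]; exact zero_mem _
    | add y y' _ _ ihy ihy' => rw [add_lie]; exact add_mem ihy ihy'
    | smul r y _ ihy => rw [smul_lie]; exact Submodule.smul_mem _ _ ihy
  have hUraise : ∀ (s : ℕ) (x v : R), x ∈ LinearMap.range ι →
      v ∈ Submodule.map ι (VF b s) → ⁅x, v⁆ ∈ Submodule.map ι (VF b (s+1)) := by
    rintro s x v ⟨z, rfl⟩ ⟨w, hw, rfl⟩
    rw [← hmul]
    exact ⟨⁅z, w⁆, brk_mem' b hb s z w hw, rfl⟩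
  -- solvability
  have hsolv : LieAlgebra.IsSolvable R := by
    set UFI : ℕ → LieIdeal ℂ R := fun s =>
      { Submodule.map ι (VF b s) with
        lie_mem := fun {x y} hy => hUlie s x y hy } with hUFIdef
    have hUFImem : ∀ (s : ℕ) (x : R), x ∈ UFI s ↔ x ∈ Submodule.map ι (VF b s) :=
      fun s x => Iff.rfl
    have hDS : ∀ i : ℕ, LieAlgebra.derivedSeries ℂ R (i+1) ≤ UFI (i+1) := by
      intro i
      induction i with
      | zero =>
        rw [LieAlgebra.derivedSeries_def, LieAlgebra.derivedSeriesOfIdeal_succ]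
        rw [LieSubmodule.lie_le_iff]
        intro x _ y _
        rw [hUFImem]
        obtain ⟨z, hz⟩ := brkR x y
        exact ⟨z, by rw [VF_one]; exact trivial, hz⟩
      | succ i ih =>
        have hstep : LieAlgebra.derivedSeries ℂ R (i+1+1) =
            ⁅LieAlgebra.derivedSeries ℂ R (i+1), LieAlgebra.derivedSeries ℂ R (i+1)⁆ :=
          LieAlgebra.derivedSeriesOfIdeal_succ ℂ R ⊤ (i+1)
        rw [hstep, LieSubmodule.lie_le_iff]
        intro x hx y hy
        rw [hUFImem]
        have hx1 : x ∈ LinearMap.range ι := by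
          have := ih hx
          rw [hUFImem] at this
          obtain ⟨w, _, rfl⟩ := this
          exact ⟨w, rfl⟩
        have hy1 : y ∈ Submodule.map ι (VF b (i+1)) := by
          have := ih hy
          rwa [hUFImem] at this
        exact hUraise (i+1) x y hx1 hy1
    refine LieAlgebra.IsSolvable.mk (R := ℂ) (k := 2*m+1+1) ?_
    rw [eq_bot_iff]
    refine le_trans (hDS (2*m+1)) ?_
    intro x hx
    rw [hUFImem] at hx
    obtain ⟨w, hw, rfl⟩ := hx
    have : w ∈ VF b (2*m+2) := hw
    rw [VF_bot] at this
    rw [Submodule.mem_bot] at this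
    subst this
    rw [map_zero]
    exact LieSubmodule.zero_mem _
  -- center
  have hcenter : LieAlgebra.center ℂ R = ⊥ := by
    rw [eq_bot_iff]
    intro z hz
    rw [LieSubmodule.mem_bot]
    rw [LieModule.mem_maxTrivSubmodule] at hz
    have h0 : ∀ j : Fin (2*m+1+1), j ≠ 0 → B.repr z j = 0 := by
      intro j hj
      have h1 := repT z j
      rw [hz T, map_zero] at h1
      have h2 : Λ j * B.repr z j = 0 := by
        rw [← h1]; simp
      exact (mul_eq_zero.mp h2).resolve_left (hΛne j hj)
    have hzT : z = B.repr z 0 • T := by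
      rw [← hB0]
      conv_lhs => rw [← B.sum_repr z]
      rw [Finset.sum_eq_single (0 : Fin (2*m+1+1))]
      · intro l _ hl
        rw [h0 l hl, zero_smul]
      · intro h; exact absurd (Finset.mem_univ _) h
    set j1 : Fin (2*m+1+1) := ⟨1, by omega⟩ with hj1def
    have hev1 : evN m k 1 = 1 := by unfold evN; simp
    have hΛj1 : Λ j1 = 1 := by
      rw [hΛdef, hj1def]
      simp [hev1]
    have h1 := hz (B j1)
    rw [hzT, lie_smul, ← lie_skew (B j1) T, adTB j1, hΛj1, one_smul, smul_neg] at h1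
    have h2 : B.repr z 0 = 0 := by
      rw [neg_eq_zero, smul_eq_zero] at h1
      exact h1.resolve_right (B.ne_zero j1)
    rw [hzT, h2, zero_smul]
  -- equivalence L ≃ N
  have hmemNI : ∀ z : L, ι z ∈ NI := fun z => ⟨z, rfl⟩
  set jmap : L →ₗ⁅ℂ⁆ NI :=
    { toFun := fun z => ⟨ι z, hmemNI z⟩
      map_add' := fun x y => by ext; simp
      map_smul' := fun r x => by ext; simp
      map_lie' := fun {x y} => by
        ext
        show ι ⁅x, y⁆ = _
        rw [hmul]
        rfl } with hjmapdef
  have hjbij : Function.Bijective jmap := by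
    constructor
    · intro x y hxy
      apply hinj
      have := congrArg (fun t : NI => (t : R)) hxy
      exact this
    · rintro ⟨v, hv⟩
      obtain ⟨z, rfl⟩ := hv
      exact ⟨z, rfl⟩
  have eqv : L ≃ₗ⁅ℂ⁆ NI := LieEquiv.ofBijective jmap hjbij
  have hNnil : LieRing.IsNilpotent NI :=
    eqv.nilpotent_iff_equiv_nilpotent.mp (L_nilpotent b hb)
  -- derivations inner
  have hinner : ∀ d : LieDerivation ℂ R R, ∃ x : R, ∀ y : R, d y = ⁅x, y⁆ := by
    have hev1 : evN m k 1 = 1 := by unfold evN; simp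
    intro d
    set w0 : R := ∑ j : Fin (2*m+1+1),
      (if j = 0 then 0 else B.repr (d T) j / Λ j) • B j with hw0def
    set α : ℂ := B.repr (d T) 0 with hαdef
    have hTw : ⁅T, w0⁆ = d T - α • T := by
      rw [hw0def]
      rw [show (⁅T, ∑ j : Fin (2*m+1+1), (if j = 0 then 0 else B.repr (d T) j / Λ j) • B j⁆ : R)
          = LieAlgebra.ad ℂ R T (∑ j : Fin (2*m+1+1),
              (if j = 0 then 0 else B.repr (d T) j / Λ j) • B j) from rfl]
      rw [map_sum]
      have h1 : ∀ j : Fin (2*m+1+1),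
          LieAlgebra.ad ℂ R T ((if j = 0 then 0 else B.repr (d T) j / Λ j) • B j)
          = B.repr (d T) j • B j - (if j = 0 then B.repr (d T) j • B j else 0) := by
        intro j
        rw [map_smul, LieAlgebra.ad_apply]
        by_cases hj : j = 0
        · subst hj
          rw [if_pos rfl, if_pos rfl, zero_smul, sub_self]
        · rw [if_neg hj, if_neg hj, adTB, smul_smul, div_mul_cancel₀ _ (hΛne j hj), sub_zero]
      rw [Finset.sum_congr rfl (fun j _ => h1 j), Finset.sum_sub_distrib, B.sum_repr,
        Finset.sum_ite_eq' Finset.univ (0 : Fin (2*m+1+1)) (fun j => B.repr (d T) j • B j)]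
      simp [hB0, hαdef]
    set D' : R → R := fun y => d y + ⁅w0, y⁆ with hD'def
    have hD'app : ∀ y, D' y = d y + ⁅w0, y⁆ := fun y => by rw [hD'def]
    have hd'T : D' T = α • T := by
      rw [hD'app, ← lie_skew w0 T, hTw]
      module
    have hd'smul : ∀ (r : ℂ) (y : R), D' (r • y) = r • D' y := by
      intro r y
      rw [hD'app, hD'app, map_smul, lie_smul, smul_add]
    have hd'lie : ∀ x y : R, D' ⁅x, y⁆ = ⁅D' x, y⁆ + ⁅x, D' y⁆ := by
      intro x y
      rw [hD'app, hD'app, hD'app, d.apply_lie_eq_add, leibniz_lie w0 x y, add_lie, lie_add]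
      abel
    have key1 : ∀ j l : Fin (2*m+1+1), Λ j * B.repr (D' (B j)) l
        = α * (Λ j * B.repr (B j) l) + Λ l * B.repr (D' (B j)) l := by
      intro j l
      have h := hd'lie T (B j)
      rw [adTB j, hd'smul (Λ j) (B j), hd'T, smul_lie, adTB j] at h
      have h2 := congrArg (fun v => B.repr v l) h
      simp only [map_smul, map_add, Finsupp.smul_apply, Finsupp.add_apply, smul_eq_mul] at h2
      rw [repT (D' (B j)) l] at h2
      exact h2
    have hone : Λ ⟨1, by omega⟩ = 1 := by
      rw [hΛdef]
      simp [hev1]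
    have hα0 : α = 0 := by
      have h := key1 ⟨1, by omega⟩ ⟨1, by omega⟩
      rw [Basis.repr_self, Finsupp.single_eq_same, hone] at h
      linear_combination -h
    have hoff : ∀ j l : Fin (2*m+1+1), j ≠ l → B.repr (D' (B j)) l = 0 := by
      intro j l hne
      have h := key1 j l
      rw [hα0] at h
      have h3 : (Λ j - Λ l) * B.repr (D' (B j)) l = 0 := by linear_combination h
      rcases mul_eq_zero.mp h3 with h4 | h4
      · exact absurd (hΛinj (by linear_combination h4)) hne
      · exact h4
    have hdiag : ∀ j : Fin (2*m+1+1), D' (B j) = B.repr (D' (B j)) j • B j := by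
      intro j
      conv_lhs => rw [← B.sum_repr (D' (B j))]
      exact Finset.sum_eq_single j
        (fun l _ hl => by rw [hoff j l (Ne.symm hl), zero_smul])
        (fun h => absurd (Finset.mem_univ _) h)
    set γ : ℕ → ℂ := fun i => if h : 1 ≤ i ∧ i ≤ 2*m+1 then
        B.repr (D' (B ⟨i, by omega⟩)) ⟨i, by omega⟩ else 0 with hγdef
    have hγapp : ∀ (i : ℕ) (h1 : 1 ≤ i) (h2 : i ≤ 2*m+1),
        γ i = B.repr (D' (B ⟨i, by omega⟩)) ⟨i, by omega⟩ := by
      intro i h1 h2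
      rw [hγdef]
      exact dif_pos ⟨h1, h2⟩
    have hYd : ∀ (i : ℕ) (h1 : 1 ≤ i) (h2 : i ≤ 2*m+1),
        D' (ι (basisVec b i)) = γ i • ι (basisVec b i) := by
      intro i h1 h2
      rw [← hBnat i h1 h2, hγapp i h1 h2]
      exact hdiag _
    have hYne : ∀ i : ℕ, 1 ≤ i → i ≤ 2*m+1 → ι (basisVec b i) ≠ 0 := by
      intro i h1 h2
      rw [← hBnat i h1 h2]
      exact B.ne_zero _
    have hrel : ∀ i1 i2 i3 : ℕ, 1 ≤ i1 → i1 ≤ 2*m+1 → 1 ≤ i2 → i2 ≤ 2*m+1 →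
        1 ≤ i3 → i3 ≤ 2*m+1 →
        ⁅basisVec b i1, basisVec b i2⁆ = basisVec b i3 → γ i3 = γ i1 + γ i2 := by
      intro i1 i2 i3 a1 a2 b1 b2 c1 c2 hbr
      have h := hd'lie (ι (basisVec b i1)) (ι (basisVec b i2))
      rw [← hmul, hbr, hYd i1 a1 a2, hYd i2 b1 b2, hYd i3 c1 c2, smul_lie, lie_smul,
        ← hmul, hbr] at h
      have h2 : (γ i3 - (γ i1 + γ i2)) • ι (basisVec b i3) = 0 := by
        rw [sub_smul, add_smul, h]
        abel
      rcases smul_eq_zero.mp h2 with h3 | h3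
      · linear_combination h3
      · exact absurd h3 (hYne i3 c1 c2)
    have rel1 : ∀ i : ℕ, 2 ≤ i → i ≤ 2*m-1 →
        ⁅basisVec b 1, basisVec b i⁆ = basisVec b (i+1) := by
      intro i h1 h2
      rw [hb 1 i (by omega), if_pos ⟨rfl, h1, h2⟩, if_neg (by omega), if_neg (by omega)]
      simp
    have rel2 : ⁅basisVec b 2, basisVec b 3⁆ = basisVec b (4+k) := by
      rw [hb 2 3 (by omega), if_neg (by omega), if_pos ⟨rfl, by omega, by omega⟩,
        if_neg (by omega)]
      simp
    have rel3 : ⁅basisVec b 2, basisVec b (2*m-1)⁆ = basisVec b (2*m+1) := by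
      rw [hb 2 (2*m-1) (by omega), if_neg (by omega), if_neg (by omega),
        if_pos ⟨by omega, by omega, by omega⟩]
      norm_num
    have hchain : ∀ i : ℕ, 2 ≤ i → i ≤ 2*m → γ i = γ 2 + ((i : ℂ) - 2) * γ 1 := by
      intro i h2i
      induction i, h2i using Nat.le_induction with
      | base => intro _; norm_num
      | succ i hi ih =>
        intro hle
        have hγi := ih (by omega)
        have hr := hrel 1 i (i+1) (by omega) (by omega) (by omega) (by omega) (by omega)
          (by omega) (rel1 i (by omega) (by omega))
        rw [hr, hγi]
        push_cast
        ring
    have hγ2 : γ 2 = ((k : ℂ) + 1) * γ 1 := by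
      have e1 := hrel 2 3 (4+k) (by omega) (by omega) (by omega) (by omega) (by omega)
        (by omega) rel2
      have e2 := hchain (4+k) (by omega) (by omega)
      have e3 := hchain 3 (by omega) (by omega)
      push_cast at e2
      linear_combination -e1 + e2 - e3
    have hγtop : γ (2*m+1) = ((2*k+2*m-1 : ℕ) : ℂ) * γ 1 := by
      have e1 := hrel 2 (2*m-1) (2*m+1) (by omega) (by omega) (by omega) (by omega)
        (by omega) (by omega) rel3
      have e2 := hchain (2*m-1) (by omega) (by omega)
      have hc : ((2*m-1 : ℕ) : ℂ) = 2*(m:ℂ) - 1 := by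
        push_cast [Nat.cast_sub (by omega : 1 ≤ 2*m)]
        ring
      rw [hc] at e2
      have hc2 : ((2*k+2*m-1 : ℕ) : ℂ) = 2*(k:ℂ) + 2*(m:ℂ) - 1 := by
        push_cast [Nat.cast_sub (by omega : 1 ≤ 2*k+2*m)]
        ring
      rw [hc2]
      linear_combination e1 + e2 + 2*hγ2
    have hfinal : ∀ j : Fin (2*m+1+1), B.repr (D' (B j)) j = γ 1 * Λ j := by
      intro j
      by_cases hj : j = 0
      · subst hj
        have hD'0 : D' (B 0) = 0 := by
          rw [hB0, hd'T, hα0, zero_smul]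
        rw [hD'0]
        rw [show Λ (0 : Fin (2*m+1+1)) = 0 from by rw [hΛdef]; simp]
        simp
      · have hvj : j.val ≠ 0 := fun h => hj (Fin.ext h)
        have hj1 : 1 ≤ j.val := by omega
        have hj2 : j.val ≤ 2*m+1 := by omega
        have hΛj : Λ j = (evN m k j.val : ℂ) := by
          rw [hΛdef]
          simp [hvj]
        have heta : (⟨j.val, by omega⟩ : Fin (2*m+1+1)) = j := by ext; rfl
        have hcγ : B.repr (D' (B j)) j = γ j.val := by
          rw [hγapp j.val hj1 hj2, heta]
        rw [hcγ, hΛj]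
        rcases Nat.lt_or_ge j.val 2 with hlt | hge
        · have h1 : j.val = 1 := by omega
          rw [h1, hev1]
          simp
        · rcases Nat.lt_or_ge j.val (2*m+1) with hlt2 | hge2
          · have hle2m : j.val ≤ 2*m := by omega
            have hch := hchain j.val (by omega) hle2m
            have hev : evN m k j.val = k + j.val - 1 := by
              unfold evN
              split_ifs <;> omega
            rw [hev]
            have hcast : ((k + j.val - 1 : ℕ) : ℂ) = (k : ℂ) + (j.val : ℂ) - 1 := by
              push_cast [Nat.cast_sub (by omega : 1 ≤ k + j.val)]
              ring
            rw [hcast]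
            linear_combination hch + hγ2
          · have hjv : j.val = 2*m+1 := by omega
            rw [hjv, show evN m k (2*m+1) = 2*k+2*m-1 from by unfold evN; split_ifs <;> omega]
            have := hγtop
            rw [show ((2*k+2*m-1 : ℕ) : ℂ) = ((2*k+2*m-1 : ℕ) : ℂ) from rfl] at this
            linear_combination this
    have hD'ad : ∀ j : Fin (2*m+1+1), D' (B j) = ⁅γ 1 • T, B j⁆ := by
      intro j
      rw [hdiag j, hfinal j, smul_lie, adTB j, smul_smul]
    have hDlin : (d.toLinearMap + (LieAlgebra.ad ℂ R w0 : Module.End ℂ R))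
        = (LieAlgebra.ad ℂ R (γ 1 • T) : Module.End ℂ R) := by
      apply B.ext
      intro j
      simp only [LinearMap.add_apply, LieAlgebra.ad_apply, LieDerivation.coeFn_coe]
      rw [← hD'app (B j)]
      exact hD'ad j
    refine ⟨γ 1 • T - w0, fun y => ?_⟩
    have h := DFunLike.congr_fun hDlin y
    simp only [LinearMap.add_apply, LieAlgebra.ad_apply, LieDerivation.coeFn_coe] at h
    rw [sub_lie, ← h]
    abel
  -- maximal nilpotent ideal
  have hmax : ∀ J : LieIdeal ℂ R, LieRing.IsNilpotent J → J ≤ NI := by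
    have hev1 : evN m k 1 = 1 := by unfold evN; simp
    have sum_lie : ∀ (g : Fin (2*m+1+1) → R) (v : R),
        ⁅(∑ j, g j : R), v⁆ = ∑ j, ⁅g j, v⁆ := by
      intro g v
      have h1 : LieModule.toEnd ℂ R R (∑ j, g j) = ∑ j, LieModule.toEnd ℂ R R (g j) :=
        map_sum (LieModule.toEnd ℂ R R) g Finset.univ
      have h2 := congrArg (fun e : Module.End ℂ R => e v) h1
      exact _root_.sum_lie Finset.univ g v
    intro J hJ x hx
    set j1 : Fin (2*m+1+1) := ⟨1, by omega⟩ with hj1def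
    set β : ℂ := B.repr x 0 with hβdef
    have hφVF : ∀ z : L, z ∈ VF b 2 → B.repr (ι z) j1 = 0 := by
      intro z hz
      induction hz using Submodule.span_induction with
      | mem y hy =>
        obtain ⟨i, hi, rfl⟩ := hy
        simp only [Set.mem_Ici] at hi
        by_cases hle : i ≤ 2*m+1
        · rw [← hBnat i (by omega) hle, Basis.repr_self, Finsupp.single_apply, if_neg]
          rw [hj1def]
          intro hcon
          have := congrArg Fin.val hcon
          simp at this
          omega
        · rw [basisVec_zero b i (by omega), map_zero]
          simp
      | zero => simp
      | add y y' _ _ ihy ihy' => rw [map_add]; simp [Finsupp.add_apply, ihy, ihy']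
      | smul r y _ ihy => rw [map_smul]; simp [Finsupp.smul_apply, ihy]
    have hφ : ∀ z : L, B.repr ⁅x, ι z⁆ j1 = β * B.repr (ι z) j1 := by
      have hlm : (B.coord j1).comp (((LieAlgebra.ad ℂ R x : Module.End ℂ R)).comp ι)
          = β • ((B.coord j1).comp ι) := by
        apply b.ext
        intro p
        simp only [LinearMap.comp_apply, LinearMap.smul_apply, Basis.coord_apply,
          LieAlgebra.ad_apply, smul_eq_mul]
        have hi1 : 1 ≤ (p : ℕ) + 1 := by omega
        have hi2 : (p : ℕ) + 1 ≤ 2*m+1 := by omega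
        have hYp : ι (b p) = B ⟨(p : ℕ) + 1, by omega⟩ := by
          rw [hBnat ((p : ℕ) + 1) hi1 hi2, basisVec_fin b p]
        have hrepY : B.repr (ι (b p)) j1 = if (p : ℕ) + 1 = 1 then 1 else 0 := by
          rw [hYp, Basis.repr_self, Finsupp.single_apply, hj1def]
          congr 1
          exact propext Fin.ext_iff
        have hbr0 : ⁅B 0, ι (b p)⁆ = ((evN m k ((p : ℕ) + 1) : ℕ) : ℂ) • ι (b p) := by
          rw [hB0, ← basisVec_fin b p, hTY]
        have hbrj : ∀ j : Fin (2*m+1+1), j ≠ 0 → B.repr ⁅B j, ι (b p)⁆ j1 = 0 := by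
          intro j hj
          rw [hBj j hj, ← basisVec_fin b p, ← hmul]
          exact hφVF _ (brk_mem b hb j.val ((p : ℕ) + 1) 1 (by omega))
        calc B.repr ⁅x, ι (b p)⁆ j1
            = ∑ j, B.repr x j * B.repr ⁅B j, ι (b p)⁆ j1 := by
              conv_lhs => rw [← B.sum_repr x]
              rw [sum_lie, map_sum, Finsupp.finset_sum_apply]
              refine Finset.sum_congr rfl fun j _ => ?_
              rw [smul_lie, map_smul]
              simp
          _ = B.repr x 0 * B.repr ⁅B 0, ι (b p)⁆ j1 :=
              Finset.sum_eq_single 0 (fun j _ hj => by rw [hbrj j hj, mul_zero])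
                (fun h => absurd (Finset.mem_univ _) h)
          _ = β * B.repr (ι (b p)) j1 := by
              rw [hbr0, map_smul]
              simp only [Finsupp.smul_apply, smul_eq_mul, hrepY, ← hβdef]
              split_ifs with h
              · rw [show (p : ℕ) + 1 = 1 from h, hev1]
                norm_num
              · ring
      intro z
      have := DFunLike.congr_fun hlm z
      simpa [Basis.coord_apply, LieAlgebra.ad_apply] using this
    have hiter : ∀ q : ℕ, ∀ z : L,
        ((LieAlgebra.ad ℂ R x : Module.End ℂ R)^q) (ι z) ∈ LinearMap.range ι ∧
        B.repr (((LieAlgebra.ad ℂ R x : Module.End ℂ R)^q) (ι z)) j1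
          = β^q * B.repr (ι z) j1 := by
      intro q
      induction q with
      | zero =>
        intro z
        constructor
        · simpa using ⟨z, rfl⟩
        · simp
      | succ q ih =>
        intro z
        obtain ⟨hmem, hco⟩ := ih z
        obtain ⟨z', hz'⟩ := hmem
        constructor
        · rw [pow_succ', Module.End.mul_apply, ← hz', LieAlgebra.ad_apply]
          exact hNlie x _ ⟨z', rfl⟩
        · rw [pow_succ', Module.End.mul_apply, ← hz', LieAlgebra.ad_apply, hφ z', hz', hco]
          ring
    have hβ0 : β = 0 := by
      by_contra hβ
      have hYj1 : B j1 = ι (basisVec b 1) := hBnat 1 (le_refl 1) (by omega)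
      have huJ : ⁅x, B j1⁆ ∈ J := by
        rw [← lie_skew x (B j1)]
        exact neg_mem (J.lie_mem hx)
      haveI : LieModule.IsNilpotent J J := hJ
      obtain ⟨q, hq⟩ := LieModule.isNilpotent_toEnd_of_isNilpotent ℂ J J ⟨x, hx⟩
      set uel : J := ⟨⁅x, B j1⁆, huJ⟩ with hueldef
      have hcoe : ∀ q : ℕ, ((((LieModule.toEnd ℂ J J ⟨x, hx⟩)^q) uel : J) : R)
          = ((LieAlgebra.ad ℂ R x : Module.End ℂ R)^q) ⁅x, B j1⁆ := by
        intro q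
        induction q with
        | zero => simp [hueldef]
        | succ q ih =>
          rw [pow_succ', pow_succ', Module.End.mul_apply, Module.End.mul_apply, ← ih]
          rfl
      have hz0 : ((LieAlgebra.ad ℂ R x : Module.End ℂ R)^q) ⁅x, B j1⁆ = 0 := by
        rw [← hcoe q, hq]
        simp
      have hcomb : ((LieAlgebra.ad ℂ R x : Module.End ℂ R)^q) ⁅x, B j1⁆
          = ((LieAlgebra.ad ℂ R x : Module.End ℂ R)^(q+1)) (ι (basisVec b 1)) := by
        rw [pow_succ, Module.End.mul_apply, hYj1]
        rfl
      have hco := (hiter (q+1) (basisVec b 1)).2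
      rw [← hcomb, hz0] at hco
      rw [← hYj1, Basis.repr_self, Finsupp.single_eq_same] at hco
      simp only [map_zero, Finsupp.coe_zero, Pi.zero_apply, mul_one] at hco
      exact hβ (pow_eq_zero_iff (Nat.succ_ne_zero q) |>.mp hco.symm)
    show x ∈ LinearMap.range ι
    have hxsum : x = ∑ j, B.repr x j • B j := (B.sum_repr x).symm
    rw [hxsum]
    apply Submodule.sum_mem
    intro j _
    by_cases hj : j = 0
    · subst hj
      rw [← hβdef, hβ0, zero_smul]
      exact zero_mem _
    · rw [hBj j hj]
      exact Submodule.smul_mem _ _ ⟨basisVec b j.val, rfl⟩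
  exact ⟨hfinrank, hsolv, hcenter, hinner, NI, hNIcoe, hNnil, hmax, ⟨eqv.symm⟩⟩

end StmtAux

theorem stmt_13 (L : Type) [LieRing L] [LieAlgebra ℂ L] (m k : ℕ) (hm : 4 ≤ m)
    (hk1 : 1 ≤ k) (hk2 : k ≤ 2 * m - 4)
    (b : Basis (Fin (2 * m + 1)) ℂ L) (hb : IsG4kBasis m k b) :
    (∀ x y : L, fTorus m k b ⁅x, y⁆ = ⁅fTorus m k b x, y⁆ + ⁅x, fTorus m k b y⁆) ∧
    ∀ (R : Type) [LieRing R] [LieAlgebra ℂ R],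
      ∀ (ι : L →ₗ[ℂ] R) (T : R),
        Function.Injective ι →
        (∀ x y : L, ι ⁅x, y⁆ = ⁅ι x, ι y⁆) →
        (∀ x : L, ⁅T, ι x⁆ = ι (fTorus m k b x)) →
        T ∉ LinearMap.range ι →
        Submodule.span ℂ (Set.range ι ∪ {T}) = ⊤ →
        (finrank ℂ R = 2 * m + 2 ∧
         LieAlgebra.IsSolvable R ∧
         -- complete: trivial center and all derivations inner
         LieAlgebra.center ℂ R = ⊥ ∧
         (∀ d : LieDerivation ℂ R R, ∃ x : R, ∀ y : R, d y = ⁅x, y⁆) ∧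
         -- the nilradical is the image of L
         ∃ N : LieIdeal ℂ R, (N : Submodule ℂ R) = LinearMap.range ι ∧
           LieRing.IsNilpotent N ∧
           (∀ J : LieIdeal ℂ R, LieRing.IsNilpotent J → J ≤ N) ∧
           Nonempty (N ≃ₗ⁅ℂ⁆ L)) := by
  refine ⟨StmtAux.fTorus_deriv b hm hk1 hb, ?_⟩
  intro R _ _ ι T h1 h2 h3 h4 h5
  exact StmtAux.mainR hm hk1 hk2 b hb R ι T h1 h2 h3 h4 h5
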